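/- Let D and B be m×m complex matrices such that B^ℓ = D^ℓ for some natural number ℓ ≥ 1, and let λ_1,…,λ_m be the eigenvalues of D counted with multiplicity. Then |det(I − B)| ≤ ∏_{i=1}^{m} (1 + |λ_i|). -/

import Mathlib

/-!
Over an algebraically closed field, `det (q A) = ∏ q μ` over the eigenvalues `μ` of `A`: split `q`
into linear factors, each of which contributes `det (A - ν) = ∏ (μ - ν)`. Applied to `y - q` this
shows that the eigenvalues of `q A` are the `q μ`, so `B ^ ℓ = D ^ ℓ` forces the eigenvalues of `B`
and of `D` to have the same `ℓ`-th powers, hence the same moduli. Finally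
`|det (1 - B)| = ∏ |1 - β| ≤ ∏ (1 + |β|)`.
-/

open Polynomial

namespace Matrix

variable {n K : Type*} [Fintype n] [DecidableEq n] [Field K] [IsAlgClosed K]

theorem card_roots_charpoly (A : Matrix n n K) : A.charpoly.roots.card = Fintype.card n := by
  rw [← (IsAlgClosed.splits _).natDegree_eq_card_roots, charpoly_natDegree_eq_dim]

theorem det_sub_algebraMap_eq_prod_roots_charpoly (A : Matrix n n K) (ν : K) :
    (A - algebraMap K (Matrix n n K) ν).det = (A.charpoly.roots.map (· - ν)).prod := by
  have h := (IsAlgClosed.splits A.charpoly).eval_eq_prod_roots ν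
  rw [A.charpoly_monic.leadingCoeff, one_mul, eval_charpoly] at h
  calc (A - algebraMap K (Matrix n n K) ν).det
      = (-1) ^ A.charpoly.roots.card * (scalar n ν - A).det := by
        rw [← neg_sub, det_neg, card_roots_charpoly]; rfl
    _ = (A.charpoly.roots.map (· - ν)).prod := by
        rw [h, ← Multiset.card_map (ν - ·), ← Multiset.prod_map_neg, Multiset.map_map]
        simp

theorem det_aeval_eq_prod_roots_charpoly (A : Matrix n n K) (q : K[X]) :
    (aeval A q).det = (A.charpoly.roots.map q.eval).prod := by
  let φ : K[X] →* K := detMonoidHom.comp (aeval A : K[X] →ₐ[K] Matrix n n K).toMonoidHom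
  have hC (c : K) : φ (C c) = c ^ A.charpoly.roots.card := by
    simp [φ, card_roots_charpoly, Algebra.algebraMap_eq_smul_one]
  have hX_sub_C (ν : K) : φ (X - C ν) = (A.charpoly.roots.map (· - ν)).prod := by
    simpa [φ] using det_sub_algebraMap_eq_prod_roots_charpoly A ν
  change φ q = _
  rw [(IsAlgClosed.splits q).eq_prod_roots, map_mul, map_multiset_prod, Multiset.map_map]
  simp only [Function.comp_def, hC, hX_sub_C, eval_mul, eval_C, eval_multiset_prod,
    Multiset.map_map, eval_sub, eval_X]
  rw [Multiset.prod_map_mul, Multiset.map_const', Multiset.prod_replicate, Multiset.prod_map_prod_map]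

theorem charpoly_aeval_eq_prod (A : Matrix n n K) (q : K[X]) :
    (aeval A q).charpoly = (A.charpoly.roots.map fun μ => X - C (q.eval μ)).prod := by
  refine Polynomial.funext fun y => ?_
  have hy : scalar n y - aeval A q = aeval A (C y - q) := by
    rw [map_sub, aeval_C]; rfl
  rw [eval_charpoly, hy, det_aeval_eq_prod_roots_charpoly, eval_multiset_prod, Multiset.map_map]
  simp

theorem roots_charpoly_aeval (A : Matrix n n K) (q : K[X]) :
    (aeval A q).charpoly.roots = A.charpoly.roots.map q.eval := by
  rw [charpoly_aeval_eq_prod]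
  simpa [Multiset.map_map, Function.comp_def] using
    roots_multiset_prod_X_sub_C (A.charpoly.roots.map q.eval)

theorem roots_charpoly_pow (A : Matrix n n K) (ℓ : ℕ) :
    (A ^ ℓ).charpoly.roots = A.charpoly.roots.map (· ^ ℓ) := by
  simpa using roots_charpoly_aeval A (X ^ ℓ)

theorem det_one_sub_eq_prod_roots_charpoly (A : Matrix n n K) :
    (1 - A).det = (A.charpoly.roots.map (1 - ·)).prod := by
  have h : aeval A (1 - X : K[X]) = 1 - A := by rw [map_sub, map_one, aeval_X]
  rw [← h, det_aeval_eq_prod_roots_charpoly]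
  simp

end Matrix

theorem Multiset.map_nnnorm_eq_of_map_pow_eq {𝕜 : Type*} [NormedDivisionRing 𝕜] {s t : Multiset 𝕜}
    {ℓ : ℕ} (hℓ : ℓ ≠ 0) (h : s.map (· ^ ℓ) = t.map (· ^ ℓ)) :
    s.map (‖·‖₊) = t.map (‖·‖₊) := by
  refine Multiset.map_injective (IsMulTorsionFree.pow_left_injective hℓ) ?_
  simpa [Multiset.map_map, Function.comp_def] using congrArg (Multiset.map (‖·‖₊)) h

theorem Matrix.norm_det_one_sub_le {n K : Type*} [Fintype n] [DecidableEq n] [NormedField K]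
    [IsAlgClosed K] (B : Matrix n n K) :
    ‖(1 - B).det‖ ≤ (B.charpoly.roots.map fun μ => 1 + ‖μ‖).prod := by
  rw [det_one_sub_eq_prod_roots_charpoly]
  refine (map_multiset_prod (normHom : K →*₀ ℝ) _).trans_le ?_
  rw [Multiset.map_map]
  change (B.charpoly.roots.map fun μ => ‖1 - μ‖).prod ≤ _
  refine Multiset.prod_map_le_prod_map₀ _ _ (fun _ _ => norm_nonneg _) fun μ _ => ?_
  simpa using norm_sub_le (1 : K) μ

/-- If `B^ℓ = D^ℓ` for some `ℓ ≥ 1`, then `|det(I − B)| ≤ ∏ᵢ (1 + |λᵢ|)` where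
`λ₁,…,λ_m` are the eigenvalues of `D` counted with multiplicity. -/
theorem abs_det_one_sub_le_of_pow_eq (m ℓ : ℕ) (hℓ : 1 ≤ ℓ)
    (D B : Matrix (Fin m) (Fin m) ℂ) (h : B ^ ℓ = D ^ ℓ) :
    ‖(1 - B).det‖ ≤
      (D.charpoly.roots.map (fun lam => 1 + ‖lam‖)).prod := by
  have hpow : B.charpoly.roots.map (· ^ ℓ) = D.charpoly.roots.map (· ^ ℓ) := by
    rw [← Matrix.roots_charpoly_pow, ← Matrix.roots_charpoly_pow, h]
  have hnorm := Multiset.map_nnnorm_eq_of_map_pow_eq (by omega) hpow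
  calc ‖(1 - B).det‖ ≤ (B.charpoly.roots.map fun μ => 1 + ‖μ‖).prod := B.norm_det_one_sub_le
    _ = (D.charpoly.roots.map fun μ => 1 + ‖μ‖).prod := by
      simpa [Multiset.map_map, Function.comp_def] using
        congrArg (fun s => (s.map fun x : NNReal => 1 + (x : ℝ)).prod) hnorm
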